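/- arXiv:2001.01679 — 3 statements merged into one kernel-verified Lean document; each statement's English description precedes it below -/
import Mathlib

section
/- Let T be a strictly positive, nondecreasing function of class C¹ on (0,∞). Let γ > 0 be a number such that T(γ) ≥ e, and let φ be a strictly positive, nondecreasing function on [e,∞) such that c_φ := ∫_e^∞ 1/(t·φ(t)) dt < ∞. Then the inequality T'(r) ≤ T(r)·φ(T(r)) holds for all r ≥ γ outside a set of Lebesgue measure not exceeding c_φ; that is, the set {r ∈ [γ,∞) : T'(r) > T(r)·φ(T(r))} has Lebesgue measure at most c_φ. -/
open MeasureTheory Real Set Topology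

/-!
On the exceptional set `E` we have `T' > T φ(T) > 0`, so `1 ≤ T'(r) / (T(r) φ(T(r)))` there,
and `T` is injective on `E` (a monotone function cannot be constant to the right of a point
where its derivative is nonzero). The change of variables `t = T(r)` therefore gives
`|E| ≤ ∫_E T'(r) / (T(r) φ(T(r))) dr = ∫_{T(E)} dt / (t φ(t)) ≤ c_φ`, as `T(E) ⊆ [e, ∞)`.
-/

theorem MonotoneOn.monotone_comp_max {α β : Type*} [LinearOrder α] [Preorder β] {f : α → β}
    {a : α} (hf : MonotoneOn f (Ici a)) : Monotone fun x => f (max a x) :=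
  fun _ _ hxy => hf (le_max_left _ _) (le_max_left _ _) (max_le_max le_rfl hxy)

theorem MonotoneOn.lt_of_hasDerivAt_ne_zero {f : ℝ → ℝ} {s : Set ℝ} {a b f' : ℝ}
    (hf : MonotoneOn f s) (hs : s.OrdConnected) (ha : a ∈ s) (hb : b ∈ s) (hab : a < b)
    (hderiv : HasDerivAt f f' a) (hf' : f' ≠ 0) : f a < f b := by
  have h_ne : ∀ᶠ z in 𝓝[>] a, f z ≠ f a :=
    (hderiv.eventually_ne hf').filter_mono (nhdsWithin_mono _ fun _ hz => ne_of_gt hz)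
  obtain ⟨z, hz_ne, hz⟩ := (h_ne.and (Ioo_mem_nhdsGT hab)).exists
  have hz_mem : z ∈ s := hs.out ha hb (Ioo_subset_Icc_self hz)
  have h_az : f a ≤ f z := hf ha hz_mem hz.1.le
  have h_zb : f z ≤ f b := hf hz_mem hb hz.2.le
  exact (lt_of_le_of_ne h_az hz_ne.symm).trans_le h_zb

theorem MonotoneOn.strictMonoOn_of_hasDerivAt_ne_zero {f f' : ℝ → ℝ} {s t : Set ℝ}
    (hf : MonotoneOn f s) (hs : s.OrdConnected) (hts : t ⊆ s)
    (hderiv : ∀ x ∈ t, HasDerivAt f (f' x) x) (hf' : ∀ x ∈ t, f' x ≠ 0) : StrictMonoOn f t :=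
  fun _ ha _ hb hab =>
    hf.lt_of_hasDerivAt_ne_zero hs (hts ha) (hts hb) hab (hderiv _ ha) (hf' _ ha)

theorem volume_le_ofReal_integral_of_one_le_deriv_mul {f f' h : ℝ → ℝ} {s u : Set ℝ}
    (hs : MeasurableSet s) (hderiv : ∀ x ∈ s, HasDerivAt f (f' x) x) (hf : InjOn f s)
    (hfs : MapsTo f s u) (hu : MeasurableSet u) (hh_nonneg : ∀ t ∈ u, 0 ≤ h t)
    (hh : IntegrableOn h u) (h_one : ∀ x ∈ s, 1 ≤ f' x * h (f x)) :
    volume s ≤ ENNReal.ofReal (∫ t in u, h t) := by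
  have h_pointwise : ∀ x ∈ s, 1 ≤ ENNReal.ofReal |f' x| * ENNReal.ofReal (h (f x)) := by
    intro x hx
    rw [← ENNReal.ofReal_mul (abs_nonneg _), ← ENNReal.ofReal_one]
    refine ENNReal.ofReal_le_ofReal ((h_one x hx).trans ?_)
    exact mul_le_mul_of_nonneg_right (le_abs_self _) (hh_nonneg _ (hfs hx))
  calc volume s = ∫⁻ _ in s, 1 := (setLIntegral_one s).symm
    _ ≤ ∫⁻ x in s, ENNReal.ofReal |f' x| * ENNReal.ofReal (h (f x)) :=
      setLIntegral_mono' hs h_pointwise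
    _ = ∫⁻ t in f '' s, ENNReal.ofReal (h t) :=
      (lintegral_image_eq_lintegral_abs_deriv_mul hs
        (fun x hx => (hderiv x hx).hasDerivWithinAt) hf fun t => ENNReal.ofReal (h t)).symm
    _ ≤ ∫⁻ t in u, ENNReal.ofReal (h t) := lintegral_mono_set hfs.image_subset
    _ = ENNReal.ofReal (∫ t in u, h t) :=
      (ofReal_integral_eq_lintegral_ofReal hh (ae_restrict_of_forall_mem hu hh_nonneg)).symm

theorem measurableSet_mem_Ici_and_mul_comp_lt {T T' φ : ℝ → ℝ} {γ c : ℝ}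
    (hT_mono : MonotoneOn T (Ici γ)) (hT_deriv : ∀ r ∈ Ici γ, HasDerivAt T (T' r) r)
    (hφ_mono : MonotoneOn φ (Ici c)) (hTc : MapsTo T (Ici γ) (Ici c)) :
    MeasurableSet {r | r ∈ Ici γ ∧ T r * φ (T r) < T' r} := by
  have hT_meas := hT_mono.monotone_comp_max.measurable
  have hφ_meas := hφ_mono.monotone_comp_max.measurable
  convert measurableSet_Ici.inter
    (measurableSet_lt (hT_meas.mul (hφ_meas.comp hT_meas)) (measurable_deriv T)) using 1
  ext r
  refine and_congr_right fun (hr : γ ≤ r) => ?_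
  show _ ↔ T (max γ r) * φ (max c (T (max γ r))) < deriv T r
  rw [max_eq_right hr, max_eq_right (hTc hr),
    (hT_deriv r hr).deriv]

theorem borel_lemma_general
    (T T' φ : ℝ → ℝ)
    (hT_mono : MonotoneOn T (Ioi 0))
    (hT_deriv : ∀ r ∈ Ioi (0:ℝ), HasDerivAt T (T' r) r)
    (γ : ℝ) (hγ : 0 < γ) (hTγ : Real.exp 1 ≤ T γ)
    (hφ_pos : ∀ t ∈ Ici (Real.exp 1), 0 < φ t)
    (hφ_mono : MonotoneOn φ (Ici (Real.exp 1)))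
    (hφ_int : IntegrableOn (fun t => 1 / (t * φ t)) (Ici (Real.exp 1)) volume) :
    volume {r | r ∈ Ici γ ∧ T r * φ (T r) < T' r} ≤
      ENNReal.ofReal (∫ t in Ici (Real.exp 1), 1 / (t * φ t)) := by
  set E := {r | r ∈ Ici γ ∧ T r * φ (T r) < T' r}
  have hγ_sub : Ici γ ⊆ Ioi 0 := Ici_subset_Ioi.2 hγ
  have hT_deriv' : ∀ r ∈ Ici γ, HasDerivAt T (T' r) r := fun r hr => hT_deriv r (hγ_sub hr)
  have hT_maps : MapsTo T (Ici γ) (Ici (Real.exp 1)) := fun r hr =>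
    hTγ.trans (hT_mono (hγ_sub self_mem_Ici) (hγ_sub hr) hr)
  have hTφ_pos : ∀ r ∈ Ici γ, 0 < T r * φ (T r) := fun r hr =>
    mul_pos ((exp_pos 1).trans_le (hT_maps hr)) (hφ_pos _ (hT_maps hr))
  have hT'_pos : ∀ r ∈ E, 0 < T' r := fun r hr => (hTφ_pos r hr.1).trans hr.2
  have hT_inj : InjOn T E :=
    (hT_mono.strictMonoOn_of_hasDerivAt_ne_zero ordConnected_Ioi (fun r hr => hγ_sub hr.1)
      (fun r hr => hT_deriv' r hr.1) fun r hr => (hT'_pos r hr).ne').injOn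
  refine volume_le_ofReal_integral_of_one_le_deriv_mul
    (measurableSet_mem_Ici_and_mul_comp_lt (hT_mono.mono hγ_sub) hT_deriv' hφ_mono hT_maps)
    (fun r hr => hT_deriv' r hr.1) hT_inj (hT_maps.mono_left fun r hr => hr.1) measurableSet_Ici
    (fun t ht => ?_) hφ_int fun r hr => ?_
  · exact one_div_nonneg.2 (mul_pos ((exp_pos 1).trans_le ht) (hφ_pos t ht)).le
  · rw [mul_one_div, one_le_div (hTφ_pos r hr.1)]
    exact hr.2.le

/-- **Borel Lemma.** Let `T` be a strictly positive nondecreasing `C¹` function on `(0,∞)`,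
`γ > 0` with `T γ ≥ e`, and `φ` a strictly positive nondecreasing function on `[e,∞)` with
`c_φ = ∫_e^∞ 1/(t φ(t)) dt < ∞`.  Then `T'(r) ≤ T(r) φ(T(r))` holds for `r ≥ γ` outside a set
of Lebesgue measure at most `c_φ`. -/
theorem borel_lemma
    (T T' φ : ℝ → ℝ)
    (hT_pos : ∀ r ∈ Ioi (0:ℝ), 0 < T r)
    (hT_mono : MonotoneOn T (Ioi 0))
    (hT_deriv : ∀ r ∈ Ioi (0:ℝ), HasDerivAt T (T' r) r)
    (hT'_cont : ContinuousOn T' (Ioi 0))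
    (γ : ℝ) (hγ : 0 < γ) (hTγ : Real.exp 1 ≤ T γ)
    (hφ_pos : ∀ t ∈ Ici (Real.exp 1), 0 < φ t)
    (hφ_mono : MonotoneOn φ (Ici (Real.exp 1)))
    (hφ_int : IntegrableOn (fun t => 1 / (t * φ t)) (Ici (Real.exp 1)) volume) :
    volume {r | r ∈ Ici γ ∧ T r * φ (T r) < T' r} ≤
      ENNReal.ofReal (∫ t in Ici (Real.exp 1), 1 / (t * φ t)) :=
  borel_lemma_general T T' φ hT_mono hT_deriv γ hγ hTγ hφ_pos hφ_mono hφ_int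
end

section
/- Let κ : [0,∞) → ℝ be a continuous function with κ(t) ≤ 0 for all t ≥ 0, and let G : [0,∞) → ℝ be a twice continuously differentiable solution of the differential equation G''(t) + κ(t)·G(t) = 0 with initial conditions G(0) = 0 and G'(0) = 1. Then for every r ≥ 1 one has ∫_1^r dt/G(t) ≤ log r. -/
open Real Set

/-- If `κ : [0,∞) → ℝ` is continuous and nonpositive, and `G` solves
`G'' + κ G = 0`, `G(0) = 0`, `G'(0) = 1`, then `∫_1^r dt/G(t) ≤ log r` for every `r ≥ 1`. -/
theorem comparison_integral_bound
    (κ G G' G'' : ℝ → ℝ)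
    (hκ_cont : ContinuousOn κ (Ici 0))
    (hκ_nonpos : ∀ t ∈ Ici (0:ℝ), κ t ≤ 0)
    (hG' : ∀ t ∈ Ici (0:ℝ), HasDerivWithinAt G (G' t) (Ici 0) t)
    (hG'' : ∀ t ∈ Ici (0:ℝ), HasDerivWithinAt G' (G'' t) (Ici 0) t)
    (hG''_cont : ContinuousOn G'' (Ici 0))
    (hODE : ∀ t ∈ Ici (0:ℝ), G'' t + κ t * G t = 0)
    (hG0 : G 0 = 0) (hG'0 : G' 0 = 1) :
    ∀ r : ℝ, 1 ≤ r → ∫ t in (1:ℝ)..r, 1 / G t ≤ Real.log r := by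
  have hGc : ContinuousOn G (Ici 0) := fun t ht => (hG' t ht).continuousWithinAt
  have hG'c : ContinuousOn G' (Ici 0) := fun t ht => (hG'' t ht).continuousWithinAt
  -- derivatives at interior points
  have hGat : ∀ s : ℝ, 0 < s → HasDerivAt G (G' s) s := fun s hs =>
    (hG' s hs.le).hasDerivAt (Ici_mem_nhds hs)
  have hG'at : ∀ s : ℝ, 0 < s → HasDerivAt G' (G'' s) s := fun s hs =>
    (hG'' s hs.le).hasDerivAt (Ici_mem_nhds hs)
  -- helper: if G > 0 on (0, T), then T ≤ G T
  have helper : ∀ T : ℝ, 0 < T → (∀ s ∈ Ioo (0:ℝ) T, 0 < G s) → T ≤ G T := by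
    intro T hT hpos
    have hsub : Icc (0:ℝ) T ⊆ Ici 0 := Icc_subset_Ici_self
    have hconv : Convex ℝ (Icc (0:ℝ) T) := convex_Icc _ _
    have hint : interior (Icc (0:ℝ) T) = Ioo 0 T := interior_Icc
    have hmono : MonotoneOn G' (Icc (0:ℝ) T) := by
      apply monotoneOn_of_deriv_nonneg hconv (hG'c.mono hsub)
      · rw [hint]
        exact fun s hs => ((hG'at s hs.1).differentiableAt).differentiableWithinAt
      · rw [hint]
        intro s hs
        rw [(hG'at s hs.1).deriv]
        have hode := hODE s (hs.1.le)
        have : G'' s = -(κ s * G s) := by linarith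
        rw [this]
        have := mul_nonpos_of_nonpos_of_nonneg (hκ_nonpos s hs.1.le) (hpos s hs).le
        linarith
    have hG'ge : ∀ s ∈ Ioo (0:ℝ) T, 1 ≤ G' s := by
      intro s hs
      have := hmono ⟨le_refl 0, hT.le⟩ ⟨hs.1.le, hs.2.le⟩ hs.1.le
      rw [hG'0] at this; exact this
    have := hconv.mul_sub_le_image_sub_of_le_deriv (hGc.mono hsub)
      (by rw [hint]; exact fun s hs => ((hGat s hs.1).differentiableAt).differentiableWithinAt)
      (C := 1)
      (by rw [hint]; intro s hs; rw [(hGat s hs.1).deriv]; exact hG'ge s hs)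
      0 ⟨le_refl 0, hT.le⟩ T ⟨hT.le, le_refl T⟩ hT.le
    rw [hG0] at this; linarith
  -- positivity near 0
  have hloc : ∃ δ > 0, ∀ s ∈ Ioo (0:ℝ) δ, 0 < G s := by
    have h0 : HasDerivWithinAt G 1 (Ici 0) 0 := hG'0 ▸ hG' 0 (mem_Ici.2 le_rfl)
    rw [hasDerivWithinAt_iff_tendsto_slope] at h0
    have hset : Ici (0:ℝ) \ {0} = Ioi 0 := Ici_sdiff_left
    rw [hset] at h0
    have hev : ∀ᶠ s in nhdsWithin 0 (Ioi (0:ℝ)), 0 < slope G 0 s :=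
      h0.eventually (eventually_gt_nhds zero_lt_one)
    rw [Filter.eventually_iff] at hev
    obtain ⟨u, hu, hsub⟩ := mem_nhdsGT_iff_exists_Ioo_subset.1 hev
    refine ⟨u, hu, fun s hs => ?_⟩
    have := hsub hs
    simp only [mem_setOf_eq, slope_def_field, hG0, div_eq_mul_inv] at this
    have hs0 : 0 < s := hs.1
    have : 0 < (G s - 0) / (s - 0) := by
      have h2 := hsub hs
      simpa [slope_def_field, hG0] using h2
    rw [sub_zero, sub_zero] at this
    exact (div_pos_iff.1 this).resolve_right (fun h => absurd h.2 (by linarith)) |>.1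
  obtain ⟨δ, hδpos, hδ⟩ := hloc
  -- global positivity
  have hpos : ∀ s : ℝ, 0 < s → 0 < G s := by
    by_contra h
    push_neg at h
    obtain ⟨s₀, hs₀, hGs₀⟩ := h
    set S := {t : ℝ | 0 < t ∧ G t ≤ 0} with hS
    have hSne : S.Nonempty := ⟨s₀, hs₀, hGs₀⟩
    have hbdd : BddBelow S := ⟨0, fun x hx => hx.1.le⟩
    set t0 := sInf S with ht0
    have hδt0 : δ ≤ t0 := by
      apply le_csInf hSne
      intro x hx
      by_contra hc
      push_neg at hc
      exact absurd hx.2 (not_le.2 (hδ x ⟨hx.1, hc⟩))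
    have ht0pos : 0 < t0 := lt_of_lt_of_le hδpos hδt0
    have hposlt : ∀ s ∈ Ioo (0:ℝ) t0, 0 < G s := by
      intro s hs
      by_contra hc
      push_neg at hc
      exact absurd hs.2 (not_lt.2 (csInf_le hbdd ⟨hs.1, hc⟩))
    have hGt0 : 0 < G t0 := lt_of_lt_of_le ht0pos (helper t0 ht0pos hposlt)
    have hcont : ContinuousAt G t0 :=
      ((hG' t0 ht0pos.le).continuousWithinAt).continuousAt (Ici_mem_nhds ht0pos)
    have hev : ∀ᶠ y in nhds t0, 0 < G y := hcont.eventually (eventually_gt_nhds hGt0)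
    obtain ⟨ε, hε, hball⟩ := Metric.eventually_nhds_iff.1 hev
    obtain ⟨s, hsS, hslt⟩ := exists_lt_of_csInf_lt hSne (lt_add_of_pos_right t0 hε)
    have hts : t0 ≤ s := csInf_le hbdd hsS
    have : 0 < G s := hball (by rw [Real.dist_eq, abs_lt]; constructor <;> linarith)
    exact absurd hsS.2 (not_le.2 this)
  -- G t ≥ t for t ≥ 1
  have hGe : ∀ t : ℝ, 1 ≤ t → t ≤ G t := fun t ht =>
    helper t (by linarith) (fun s hs => hpos s hs.1)
  intro r hr
  have hIcc : Icc (1:ℝ) r ⊆ Ici 0 := fun x hx => le_trans zero_le_one hx.1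
  have hne : ∀ t ∈ Icc (1:ℝ) r, G t ≠ 0 := fun t ht =>
    ne_of_gt (lt_of_lt_of_le zero_lt_one (le_trans ht.1 (hGe t ht.1)))
  have hint1 : IntervalIntegrable (fun t => 1 / G t) MeasureTheory.volume 1 r := by
    apply ContinuousOn.intervalIntegrable
    rw [uIcc_of_le hr]
    exact ContinuousOn.div continuousOn_const (hGc.mono hIcc) hne
  have hint2 : IntervalIntegrable (fun t => 1 / t) MeasureTheory.volume 1 r := by
    apply ContinuousOn.intervalIntegrable
    rw [uIcc_of_le hr]
    exact ContinuousOn.div continuousOn_const continuousOn_id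
      (fun t ht => ne_of_gt (lt_of_lt_of_le zero_lt_one ht.1))
  have hmono := intervalIntegral.integral_mono_on hr hint1 hint2 (fun t ht => by
    have h1 : (1:ℝ) ≤ t := ht.1
    exact one_div_le_one_div_of_le (by linarith) (hGe t h1))
  have hlog : ∫ t in (1:ℝ)..r, 1 / t = Real.log r := by
    rw [integral_one_div (by
      rw [uIcc_of_le hr]
      intro h
      exact absurd h.1 (by norm_num))]
    simp
  linarith [hmono, hlog.le, hlog.ge]
end

section
/- Let κ : [0,∞) → ℝ be a continuous, nonpositive and nonincreasing function, and let G : [0,∞) → ℝ be a twice continuously differentiable solution of the differential equation G''(t) + κ(t)·G(t) = 0 with initial conditions G(0) = 0 and G'(0) = 1. Then for every r ≥ 0 one has G(r) ≤ r · exp(r·√(−κ(r))). -/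
open Real Set

/-!
Since `κ` is nonincreasing and nonpositive, on `[0, r]` we have `|G''| = -κ |G| ≤ K² |G|` with
`K = √(-κ r)`. Hence the vector `(K G, G')` grows at rate at most `K` in the sup norm, and
Gronwall's inequality gives `|G'| ≤ exp (K r)` on `[0, r]`; the mean value inequality then
bounds `G r` by `r exp (K r)`.
-/

section SecondOrderGronwall

variable {G G' G'' : ℝ → ℝ} {a b K : ℝ}

theorem norm_phase_le_of_abs_second_deriv_le (hK : 0 ≤ K)
    (hG : ∀ x ∈ Icc a b, HasDerivWithinAt G (G' x) (Icc a b) x)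
    (hG' : ∀ x ∈ Icc a b, HasDerivWithinAt G' (G'' x) (Icc a b) x)
    (bound : ∀ x ∈ Ico a b, |G'' x| ≤ K ^ 2 * |G x|) :
    ∀ x ∈ Icc a b, ‖(K * G x, G' x)‖ ≤ ‖(K * G a, G' a)‖ * exp (K * (x - a)) := by
  have hphase : ∀ x ∈ Icc a b,
      HasDerivWithinAt (fun t ↦ (K * G t, G' t)) (K * G' x, G'' x) (Icc a b) x :=
    fun x hx ↦ ((hG x hx).const_mul K).prodMk (hG' x hx)
  have hrate : ∀ x ∈ Ico a b, ‖(K * G' x, G'' x)‖ ≤ K * ‖(K * G x, G' x)‖ + 0 := by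
    intro x hx
    change max |K * G' x| |G'' x| ≤ K * max |K * G x| |G' x| + 0
    rw [add_zero, abs_mul, abs_mul, abs_of_nonneg hK]
    refine max_le (mul_le_mul_of_nonneg_left (le_max_right _ _) hK) ?_
    calc |G'' x| ≤ K * (K * |G x|) := (bound x hx).trans_eq (by ring)
      _ ≤ K * max (K * |G x|) |G' x| := mul_le_mul_of_nonneg_left (le_max_left _ _) hK
  intro x hx
  simpa only [gronwallBound_ε0] using
    norm_le_gronwallBound_of_norm_deriv_right_le
      (fun t ht ↦ (hphase t ht).continuousWithinAt)
      (fun t ht ↦ (hphase t (Ico_subset_Icc_self ht)).mono_of_mem_nhdsWithin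
        (Icc_mem_nhdsGE_of_mem ht))
      le_rfl hrate x hx

theorem abs_sub_le_of_abs_second_deriv_le (hK : 0 ≤ K) (hab : a ≤ b)
    (hG : ∀ x ∈ Icc a b, HasDerivWithinAt G (G' x) (Icc a b) x)
    (hG' : ∀ x ∈ Icc a b, HasDerivWithinAt G' (G'' x) (Icc a b) x)
    (bound : ∀ x ∈ Ico a b, |G'' x| ≤ K ^ 2 * |G x|) :
    |G b - G a| ≤ ‖(K * G a, G' a)‖ * exp (K * (b - a)) * (b - a) := by
  have hG'_le : ∀ x ∈ Ico a b, ‖G' x‖ ≤ ‖(K * G a, G' a)‖ * exp (K * (b - a)) := by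
    intro x hx
    calc ‖G' x‖ ≤ ‖(K * G x, G' x)‖ := norm_snd_le (K * G x, G' x)
      _ ≤ ‖(K * G a, G' a)‖ * exp (K * (x - a)) :=
        norm_phase_le_of_abs_second_deriv_le hK hG hG' bound x (Ico_subset_Icc_self hx)
      _ ≤ ‖(K * G a, G' a)‖ * exp (K * (b - a)) := by
        gcongr
        exact hx.2.le
  exact norm_image_sub_le_of_norm_deriv_le_segment' hG hG'_le b (right_mem_Icc.2 hab)

end SecondOrderGronwall

theorem comparison_upper_bound_general
    (κ G G' G'' : ℝ → ℝ)
    (hκ_nonpos : ∀ t ∈ Ici (0:ℝ), κ t ≤ 0)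
    (hκ_anti : AntitoneOn κ (Ici 0))
    (hG' : ∀ t ∈ Ici (0:ℝ), HasDerivWithinAt G (G' t) (Ici 0) t)
    (hG'' : ∀ t ∈ Ici (0:ℝ), HasDerivWithinAt G' (G'' t) (Ici 0) t)
    (hODE : ∀ t ∈ Ici (0:ℝ), G'' t + κ t * G t = 0)
    (hG0 : G 0 = 0) (hG'0 : G' 0 = 1) :
    ∀ r ∈ Ici (0:ℝ), G r ≤ r * Real.exp (r * Real.sqrt (-κ r)) := by
  intro r hr
  set K := √(-κ r)
  have hK_sq : K ^ 2 = -κ r := sq_sqrt (neg_nonneg.2 (hκ_nonpos r hr))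
  have hsub : Icc 0 r ⊆ Ici (0:ℝ) := Icc_subset_Ici_self
  have bound : ∀ x ∈ Ico 0 r, |G'' x| ≤ K ^ 2 * |G x| := by
    intro x hx
    have hx0 : x ∈ Ici (0:ℝ) := hx.1
    rw [show G'' x = -κ x * G x by linarith [hODE x hx0], abs_mul,
      abs_of_nonneg (neg_nonneg.2 (hκ_nonpos x hx0)), hK_sq]
    gcongr
    exact hκ_anti hx0 hr hx.2.le
  have key := abs_sub_le_of_abs_second_deriv_le (sqrt_nonneg _) hr
    (fun x hx ↦ (hG' x (hsub hx)).mono hsub) (fun x hx ↦ (hG'' x (hsub hx)).mono hsub) bound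
  rw [hG0, hG'0, mul_zero, sub_zero, sub_zero] at key
  calc G r ≤ |G r| := le_abs_self _
    _ ≤ ‖((0:ℝ), (1:ℝ))‖ * exp (K * r) * r := key
    _ = r * exp (r * K) := by simp [Prod.norm_def, mul_comm]

/-- If `κ : [0,∞) → ℝ` is continuous, nonpositive and nonincreasing, and `G` solves
`G'' + κ G = 0`, `G(0) = 0`, `G'(0) = 1`, then `G(r) ≤ r exp(r √(-κ(r)))` for every `r ≥ 0`. -/
theorem comparison_upper_bound
    (κ G G' G'' : ℝ → ℝ)
    (hκ_cont : ContinuousOn κ (Ici 0))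
    (hκ_nonpos : ∀ t ∈ Ici (0:ℝ), κ t ≤ 0)
    (hκ_anti : AntitoneOn κ (Ici 0))
    (hG' : ∀ t ∈ Ici (0:ℝ), HasDerivWithinAt G (G' t) (Ici 0) t)
    (hG'' : ∀ t ∈ Ici (0:ℝ), HasDerivWithinAt G' (G'' t) (Ici 0) t)
    (hG''_cont : ContinuousOn G'' (Ici 0))
    (hODE : ∀ t ∈ Ici (0:ℝ), G'' t + κ t * G t = 0)
    (hG0 : G 0 = 0) (hG'0 : G' 0 = 1) :
    ∀ r ∈ Ici (0:ℝ), G r ≤ r * Real.exp (r * Real.sqrt (-κ r)) :=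
  comparison_upper_bound_general κ G G' G'' hκ_nonpos hκ_anti hG' hG'' hODE hG0 hG'0
end
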